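/- arXiv:2302.05672 — 2 statements merged into one kernel-verified Lean document; each statement's English description precedes it below -/
import Mathlib

section
/- Let E be a real inner product space. For all a, b ∈ E one has ⟪‖a‖²·a − ‖b‖²·b, a − b⟫ ≥ (1/4)·‖a − b‖⁴; in particular this inner product is nonnegative. -/
open scoped RealInnerProductSpace

theorem stmt_1 {E : Type*} [NormedAddCommGroup E] [InnerProductSpace ℝ E] (a b : E) :
    (1 / 4) * ‖a - b‖ ^ 4 ≤ ⟪(‖a‖ ^ 2) • a - (‖b‖ ^ 2) • b, a - b⟫ ∧
      0 ≤ ⟪(‖a‖ ^ 2) • a - (‖b‖ ^ 2) • b, a - b⟫ := by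
  have hab : ⟪a, b⟫ ≤ ‖a‖ * ‖b‖ := real_inner_le_norm a b
  have hab' : -(‖a‖ * ‖b‖) ≤ ⟪a, b⟫ := neg_le_of_abs_le (abs_real_inner_le_norm a b)
  have hnorm : ‖a - b‖ ^ 2 = ‖a‖ ^ 2 - 2 * ⟪a, b⟫ + ‖b‖ ^ 2 := by
    rw [@norm_sub_sq_real]
  have hinner : ⟪(‖a‖ ^ 2) • a - (‖b‖ ^ 2) • b, a - b⟫ =
      ‖a‖ ^ 4 + ‖b‖ ^ 4 - (‖a‖ ^ 2 + ‖b‖ ^ 2) * ⟪a, b⟫ := by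
    simp only [inner_sub_left, inner_sub_right, real_inner_smul_left,
      real_inner_self_eq_norm_sq, real_inner_comm b a]
    ring
  have h1 : (1 / 4) * ‖a - b‖ ^ 4 ≤ ⟪(‖a‖ ^ 2) • a - (‖b‖ ^ 2) • b, a - b⟫ := by
    rw [hinner]
    have : ‖a - b‖ ^ 4 = (‖a - b‖ ^ 2) ^ 2 := by ring
    rw [this, hnorm]
    nlinarith [sq_nonneg (‖a‖ - ‖b‖), sq_nonneg (‖a‖ + ‖b‖), sq_nonneg (‖a‖ ^ 2 - ‖b‖ ^ 2),
      norm_nonneg a, norm_nonneg b, sq_nonneg (‖a‖ * ‖b‖ - ⟪a, b⟫), sq_nonneg (‖a‖ * ‖b‖ + ⟪a, b⟫)]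
  refine ⟨h1, le_trans (by positivity) h1⟩
end

section
/- Let X, B, Y be real Banach spaces, ι₁ : X → B a compact bounded linear operator, and ι₂ : B → Y an injective bounded linear operator. Let T > 0, R > 0 and η ∈ (0,1]. Let A be the set of all continuous functions u : [0,T] → B for which there exists v : [0,T] → X with u(t) = ι₁(v(t)) and ‖v(t)‖_X ≤ R for every t ∈ [0,T], and such that ‖ι₂(u(t)) − ι₂(u(s))‖_Y ≤ R·|t − s|^η for all s, t ∈ [0,T]. Then A is relatively compact (totally bounded) in C([0,T]; B) equipped with the supremum norm. -/
theorem stmt_11 {X B Y : Type*}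
    [NormedAddCommGroup X] [NormedSpace ℝ X]
    [NormedAddCommGroup B] [NormedSpace ℝ B]
    [NormedAddCommGroup Y] [NormedSpace ℝ Y]
    (ι₁ : X →L[ℝ] B) (ι₂ : B →L[ℝ] Y) (hι₂ : Function.Injective ι₂)
    (hι₁ : ∀ ρ : ℝ, IsCompact (closure (ι₁ '' Metric.closedBall 0 ρ)))
    (T R η : ℝ) (hT : 0 < T) (hR : 0 < R) (hη : 0 < η) (hη1 : η ≤ 1)
    (A : Set C(Set.Icc (0:ℝ) T, B))
    (hA : A = {u : C(Set.Icc (0:ℝ) T, B) |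
      (∃ v : Set.Icc (0:ℝ) T → X,
        ∀ t, u t = ι₁ (v t) ∧ ‖v t‖ ≤ R) ∧
      ∀ s t : Set.Icc (0:ℝ) T,
        ‖ι₂ (u t) - ι₂ (u s)‖ ≤ R * |(t : ℝ) - (s : ℝ)| ^ η}) :
    TotallyBounded A := by
  subst hA
  set K := closure (ι₁ '' Metric.closedBall 0 R) with hKdef
  have hKcomp : IsCompact K := hι₁ R
  -- uniform injectivity modulus of ι₂ on the compact set K
  have key : ∀ ε : ℝ, 0 < ε → ∃ ε' > (0:ℝ), ∀ a ∈ K, ∀ b ∈ K,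
      ‖ι₂ a - ι₂ b‖ < ε' → dist a b < ε := by
    intro ε hε
    set S : Set (B × B) := (K ×ˢ K) ∩ {p : B × B | ε ≤ dist p.1 p.2} with hSdef
    have hScomp : IsCompact S :=
      (hKcomp.prod hKcomp).inter_right
        (isClosed_le continuous_const (continuous_dist))
    rcases S.eq_empty_or_nonempty with hSe | hSne
    · refine ⟨1, one_pos, fun a ha b hb _ => ?_⟩
      by_contra hcon
      push_neg at hcon
      have hmem : (a, b) ∈ S := ⟨⟨ha, hb⟩, hcon⟩
      rw [hSe] at hmem
      exact hmem
    · obtain ⟨p₀, hp₀S, hp₀min⟩ := hScomp.exists_isMinOn hSne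
        ((continuous_norm.comp ((ι₂.continuous.comp continuous_fst).sub
          (ι₂.continuous.comp continuous_snd))).continuousOn)
      refine ⟨‖ι₂ p₀.1 - ι₂ p₀.2‖, ?_, fun a ha b hb hab => ?_⟩
      · have hne : p₀.1 ≠ p₀.2 := by
          intro h
          have h2 : ε ≤ dist p₀.1 p₀.2 := hp₀S.2
          rw [h, dist_self] at h2
          exact absurd (lt_of_lt_of_le hε h2) (lt_irrefl 0)
        have hιne : ι₂ p₀.1 ≠ ι₂ p₀.2 := fun h => hne (hι₂ h)
        exact norm_sub_pos_iff.mpr hιne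
      · by_contra hcon
        push_neg at hcon
        have hmem : (a, b) ∈ S := ⟨⟨ha, hb⟩, hcon⟩
        exact absurd (hp₀min hmem) (not_le.mpr hab)
  -- move to bounded continuous functions
  haveI : CompactSpace (Set.Icc (0:ℝ) T) := isCompact_iff_compactSpace.mp isCompact_Icc
  rw [← totallyBounded_image_iff
    (ContinuousMap.isUniformInducing_equivBoundedOfCompact (Set.Icc (0:ℝ) T) B)]
  set e := ContinuousMap.equivBoundedOfCompact (Set.Icc (0:ℝ) T) B with he
  set A' := e '' {u : C(Set.Icc (0:ℝ) T, B) |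
      (∃ v : Set.Icc (0:ℝ) T → X,
        ∀ t, u t = ι₁ (v t) ∧ ‖v t‖ ≤ R) ∧
      ∀ s t : Set.Icc (0:ℝ) T,
        ‖ι₂ (u t) - ι₂ (u s)‖ ≤ R * |(t : ℝ) - (s : ℝ)| ^ η} with hA'
  have in_s : ∀ (f : BoundedContinuousFunction (Set.Icc (0:ℝ) T) B) (x : Set.Icc (0:ℝ) T), f ∈ A' → f x ∈ K := by
    rintro f x ⟨u, ⟨⟨v, hv⟩, _⟩, rfl⟩
    have : (e u) x = u x := rfl
    rw [this, (hv x).1]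
    exact subset_closure ⟨v x, Metric.mem_closedBall.mpr (by
      simpa [dist_zero_right] using (hv x).2), rfl⟩
  have hHolder : ∀ f ∈ A', ∀ s t : Set.Icc (0:ℝ) T,
      ‖ι₂ (f t) - ι₂ (f s)‖ ≤ R * |(t : ℝ) - (s : ℝ)| ^ η := by
    rintro f ⟨u, ⟨_, hu⟩, rfl⟩ s t
    exact hu s t
  have equi : Equicontinuous ((↑) : A' → Set.Icc (0:ℝ) T → B) := by
    apply UniformEquicontinuous.equicontinuous
    rw [Metric.uniformEquicontinuous_iff]
    intro ε hε
    obtain ⟨ε', hε', hkey⟩ := key ε hε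
    refine ⟨(ε' / (2 * R)) ^ (1/η), Real.rpow_pos_of_pos
      (div_pos hε' (by linarith)) _, fun x y hxy f => ?_⟩
    have hval : ∀ z : Set.Icc (0:ℝ) T, (f : Set.Icc (0:ℝ) T → B) z ∈ K :=
      fun z => in_s f z f.2
    apply hkey _ (hval x) _ (hval y)
    have hbd := hHolder f f.2 y x
    have hdist : dist x y = |(x : ℝ) - (y : ℝ)| := by
      rw [Subtype.dist_eq, Real.dist_eq]
    have hc : (0:ℝ) < ε' / (2 * R) := div_pos hε' (by linarith)
    have hpow : |(x : ℝ) - (y : ℝ)| ^ η ≤ ((ε' / (2 * R)) ^ (1/η)) ^ η :=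
      Real.rpow_le_rpow (abs_nonneg _) (by rw [← hdist]; exact hxy.le) hη.le
    have heq : ((ε' / (2 * R)) ^ (1/η)) ^ η = ε' / (2 * R) := by
      rw [← Real.rpow_mul hc.le, one_div_mul_cancel hη.ne', Real.rpow_one]
    calc ‖ι₂ ((f : Set.Icc (0:ℝ) T → B) x) - ι₂ ((f : Set.Icc (0:ℝ) T → B) y)‖
        ≤ R * |(x : ℝ) - (y : ℝ)| ^ η := hbd
      _ ≤ R * (ε' / (2 * R)) := by
          rw [← heq]
          exact mul_le_mul_of_nonneg_left hpow hR.le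
      _ = ε' / 2 := by field_simp
      _ < ε' := half_lt_self hε'
  exact ((BoundedContinuousFunction.arzela_ascoli K hKcomp A' in_s
    equi).totallyBounded).subset subset_closure
end
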